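/- arXiv:1803.00084 — 10 statements merged into one kernel-verified Lean document; each statement's English description precedes it below -/
import Mathlib

section
/- Let f, g : ℝ → ℝ² be smooth unit-speed plane curves (‖f'‖ = ‖g'‖ = 1), with signed curvatures κ_f(s) = det(f'(s), f''(s)) and κ_g(t) = det(g'(t), g''(t)). Let t : ℝ → ℝ be a smooth function with f'(s) = g'(t(s)) for all s in a neighborhood of s₀, and assume κ_g(t(s₀)) ≠ 0 and κ_f(s₀) ≠ κ_g(t(s₀)). Define h(s) = f(s) − g(t(s)). Then h'(s₀) ≠ 0 and h'(s₀) is parallel to f'(s₀), i.e. det(h'(s₀), f'(s₀)) = 0. (In particular, the tangent line of the secant caustic at the point f(s₀) − g(t(s₀)) is parallel to the tangent lines of the curves at f(s₀) and g(t(s₀)).) -/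
/-- Determinant of the 2×2 matrix with columns `v`, `w`. -/
def det2 (v w : ℝ × ℝ) : ℝ := v.1 * w.2 - v.2 * w.1

/-- The Euclidean norm on `ℝ × ℝ`. -/
noncomputable def norm2 (v : ℝ × ℝ) : ℝ := Real.sqrt (v.1 ^ 2 + v.2 ^ 2)

/-- The tangent line of the secant caustic at a regular point is parallel to the
tangent lines of the curves at the corresponding parallel pair. -/
theorem secant_caustic_tangent_parallel
    (f g : ℝ → ℝ × ℝ) (t : ℝ → ℝ) (s₀ : ℝ)
    (hf : ContDiff ℝ (⊤ : ℕ∞) f) (hg : ContDiff ℝ (⊤ : ℕ∞) g) (ht : ContDiff ℝ (⊤ : ℕ∞) t)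
    (hfu : ∀ s, norm2 (deriv f s) = 1) (hgu : ∀ s, norm2 (deriv g s) = 1)
    (κf κg : ℝ → ℝ)
    (hκf : ∀ s, κf s = det2 (deriv f s) (deriv (deriv f) s))
    (hκg : ∀ s, κg s = det2 (deriv g s) (deriv (deriv g) s))
    (hpar : ∀ᶠ s in nhds s₀, deriv f s = deriv g (t s))
    (hg0 : κg (t s₀) ≠ 0) (hne : κf s₀ ≠ κg (t s₀))
    (h : ℝ → ℝ × ℝ) (hh : ∀ s, h s = f s - g (t s)) :
    deriv h s₀ ≠ 0 ∧ det2 (deriv h s₀) (deriv f s₀) = 0 := by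
  have hfd : Differentiable ℝ f := hf.differentiable (by simp)
  have hgd : Differentiable ℝ g := hg.differentiable (by simp)
  have htd : Differentiable ℝ t := ht.differentiable (by simp)
  have hg'd : Differentiable ℝ (deriv g) := by
    have h2 : ContDiff ℝ (⊤ : ℕ∞) g := hg.of_le (by simp)
    exact (contDiff_infty_iff_deriv.mp h2).2.differentiable (by norm_num)
  -- value of hpar at s₀
  have eq0 : deriv f s₀ = deriv g (t s₀) := hpar.self_of_nhds
  -- derivative of h
  have heq : h = fun s => f s - g (t s) := funext hh
  have hcomp : deriv (g ∘ t) s₀ = deriv t s₀ • deriv g (t s₀) :=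
    deriv.scomp s₀ (hgd _) (htd _)
  have E1 : deriv h s₀ = deriv f s₀ - deriv t s₀ • deriv g (t s₀) := by
    rw [heq]
    have : (fun s => f s - g (t s)) = fun s => f s - (g ∘ t) s := rfl
    rw [this, deriv_fun_sub (hfd s₀) ((hgd _).comp s₀ (htd s₀)), hcomp]
  -- second derivative relation
  have E2 : deriv (deriv f) s₀ = deriv t s₀ • deriv (deriv g) (t s₀) := by
    have hEE : deriv f =ᶠ[nhds s₀] fun s => deriv g (t s) := hpar
    rw [hEE.deriv_eq]
    exact deriv.scomp s₀ (hg'd _) (htd _)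
  -- κf s₀ = t' * κg (t s₀)
  have Eκ : κf s₀ = deriv t s₀ * κg (t s₀) := by
    rw [hκf, hκg, E2, eq0]
    simp [det2, Prod.smul_fst, Prod.smul_snd, smul_eq_mul]
    ring
  have hτ : deriv t s₀ ≠ 1 := by
    intro h1
    rw [h1, one_mul] at Eκ
    exact hne Eκ
  have E3 : deriv h s₀ = (1 - deriv t s₀) • deriv f s₀ := by
    rw [E1, ← eq0, sub_smul, one_smul]
  have hf0 : deriv f s₀ ≠ 0 := by
    intro h0
    have := hfu s₀
    rw [h0] at this
    simp [norm2] at this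
  constructor
  · rw [E3]
    exact smul_ne_zero (sub_ne_zero.mpr (fun hc => hτ hc.symm)) hf0
  · rw [E3]
    simp [det2, Prod.smul_fst, Prod.smul_snd, smul_eq_mul]
    ring
end

section
/- Let f, g : ℝ → ℝ² be smooth unit-speed plane curves with signed curvatures κ_f(s) = det(f'(s), f''(s)) and κ_g(t) = det(g'(t), g''(t)). Let t : ℝ → ℝ be a smooth function with f'(s) = g'(t(s)) for all s in a neighborhood of s₀, and assume κ_g(t(s₀)) ≠ 0 and κ_f(s₀) ≠ κ_g(t(s₀)). Define h(s) = f(s) − g(t(s)). Then the signed curvature of h at s₀, namely det(h'(s₀), h''(s₀))/‖h'(s₀)‖³, equals κ_f(s₀)·|κ_g(t(s₀))| / |κ_f(s₀) − κ_g(t(s₀))|. -/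
lemma norm2_smul (c : ℝ) (v : ℝ × ℝ) : norm2 (c • v) = |c| * norm2 v := by
  unfold norm2
  rw [show (c • v).1 = c * v.1 from rfl, show (c • v).2 = c * v.2 from rfl,
    mul_pow, mul_pow, ← mul_add, Real.sqrt_mul (sq_nonneg c), Real.sqrt_sq_eq_abs]

/-- The curvature of the secant caustic at a regular point in terms of the
curvatures of the underlying curves at the corresponding parallel pair. -/
theorem secant_caustic_curvature
    (f g : ℝ → ℝ × ℝ) (t : ℝ → ℝ) (s₀ : ℝ)
    (hf : ContDiff ℝ (⊤ : ℕ∞) f) (hg : ContDiff ℝ (⊤ : ℕ∞) g) (ht : ContDiff ℝ (⊤ : ℕ∞) t)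
    (hfu : ∀ s, norm2 (deriv f s) = 1) (hgu : ∀ s, norm2 (deriv g s) = 1)
    (κf κg : ℝ → ℝ)
    (hκf : ∀ s, κf s = det2 (deriv f s) (deriv (deriv f) s))
    (hκg : ∀ s, κg s = det2 (deriv g s) (deriv (deriv g) s))
    (hpar : ∀ᶠ s in nhds s₀, deriv f s = deriv g (t s))
    (hg0 : κg (t s₀) ≠ 0) (hne : κf s₀ ≠ κg (t s₀))
    (h : ℝ → ℝ × ℝ) (hh : ∀ s, h s = f s - g (t s)) :
    det2 (deriv h s₀) (deriv (deriv h) s₀) / (norm2 (deriv h s₀)) ^ 3 =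
      κf s₀ * |κg (t s₀)| / |κf s₀ - κg (t s₀)| := by
  have hdf : Differentiable ℝ f := hf.differentiable (by simp)
  have hdg : Differentiable ℝ g := hg.differentiable (by simp)
  have hdt : Differentiable ℝ t := ht.differentiable (by simp)
  have hdf1 : Differentiable ℝ (deriv f) :=
    (contDiff_infty_iff_deriv.mp (hf.of_le (by simp))).2.differentiable (by norm_num)
  have hdg1 : Differentiable ℝ (deriv g) :=
    (contDiff_infty_iff_deriv.mp (hg.of_le (by simp))).2.differentiable (by norm_num)
  have hdt1 : Differentiable ℝ (deriv t) :=
    (contDiff_infty_iff_deriv.mp (ht.of_le (by simp))).2.differentiable (by norm_num)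
  have heq : h = fun s => f s - g (t s) := funext hh
  have hgt : ∀ s, HasDerivAt (fun s => g (t s)) (deriv t s • deriv g (t s)) s := fun s =>
    HasDerivAt.scomp s (hdg (t s)).hasDerivAt (hdt s).hasDerivAt
  have hdh : ∀ s, HasDerivAt h (deriv f s - deriv t s • deriv g (t s)) s := by
    intro s
    rw [heq]
    exact (hdf s).hasDerivAt.sub (hgt s)
  have hderh : deriv h = fun s => deriv f s - deriv t s • deriv g (t s) :=
    funext fun s => (hdh s).deriv
  set T := t s₀ with hT
  set u := deriv t s₀ with hu
  set A := deriv f s₀ with hA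
  set B' := deriv (deriv g) T with hB'
  have hBA : deriv g T = A := hpar.self_of_nhds.symm
  have hderg1 : HasDerivAt (fun s => deriv g (t s)) (u • B') s₀ :=
    HasDerivAt.scomp s₀ (hdg1 T).hasDerivAt (hdt s₀).hasDerivAt
  have hA' : deriv (deriv f) s₀ = u • B' := by
    rw [Filter.EventuallyEq.deriv_eq hpar]
    exact hderg1.deriv
  set w := deriv (deriv t) s₀ with hw
  have h2 : HasDerivAt (deriv h)
      (deriv (deriv f) s₀ - (u • (u • B') + w • deriv g T)) s₀ := by
    rw [hderh]
    exact (hdf1 s₀).hasDerivAt.sub ((hdt1 s₀).hasDerivAt.smul hderg1)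
  have hDH1 : deriv h s₀ = (1 - u) • A := by
    rw [(hdh s₀).deriv, hBA]
    module
  have hDH2 : deriv (deriv h) s₀ = (u - u ^ 2) • B' - w • A := by
    rw [h2.deriv, hA', hBA]
    module
  have hq : κg T = det2 A B' := by rw [hκg, hBA]
  have hp : κf s₀ = u * κg T := by
    rw [hκf, hA', hq]
    simp only [det2, Prod.smul_fst, Prod.smul_snd, smul_eq_mul]
    ring
  have hdet : det2 (deriv h s₀) (deriv (deriv h) s₀) = (1 - u) ^ 2 * u * κg T := by
    rw [hDH1, hDH2, hq]
    simp only [det2, Prod.smul_fst, Prod.smul_snd, smul_eq_mul, Prod.fst_sub, Prod.snd_sub]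
    ring
  have hnorm : norm2 (deriv h s₀) = |1 - u| := by
    rw [hDH1, norm2_smul, hfu s₀, mul_one]
  have hune : u ≠ 1 := by
    intro h1
    exact hne (by rw [hp, h1, one_mul])
  have hm : (1 : ℝ) - u ≠ 0 := sub_ne_zero.mpr (Ne.symm hune)
  have ham : |1 - u| ≠ 0 := abs_ne_zero.mpr hm
  have haq : |κg T| ≠ 0 := abs_ne_zero.mpr hg0
  rw [hdet, hnorm, hp]
  rw [show u * κg T - κg T = -((1 - u) * κg T) by ring, abs_neg, abs_mul]
  rw [show |1 - u| ^ 3 = |1 - u| ^ 2 * |1 - u| by ring, sq_abs]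
  field_simp
end

section
/- Let f, g : ℝ → ℝ² be smooth unit-speed plane curves with signed curvatures κ_f(s) = det(f'(s), f''(s)) and κ_g(t) = det(g'(t), g''(t)). Let t : ℝ → ℝ be a smooth function with f'(s) = g'(t(s)) for all s in a neighborhood of s₀, and assume κ_g(t(s₀)) ≠ 0. Then the curve h(s) = f(s) − g(t(s)) is singular at s₀, i.e. h'(s₀) = 0, if and only if κ_f(s₀) = κ_g(t(s₀)). (This is the parametric form of: the secant caustic is singular at a − b if and only if the curve is curved in the same side at the parallel pair a, b and the absolute values of the curvatures at a and b coincide.) -/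
/-- The secant caustic is singular at a point corresponding to a parallel pair
(parameterized in the same direction) iff the signed curvatures there coincide. -/
theorem secant_caustic_singular_iff
    (f g : ℝ → ℝ × ℝ) (t : ℝ → ℝ) (s₀ : ℝ)
    (hf : ContDiff ℝ (⊤ : ℕ∞) f) (hg : ContDiff ℝ (⊤ : ℕ∞) g) (ht : ContDiff ℝ (⊤ : ℕ∞) t)
    (hfu : ∀ s, norm2 (deriv f s) = 1) (hgu : ∀ s, norm2 (deriv g s) = 1)
    (κf κg : ℝ → ℝ)
    (hκf : ∀ s, κf s = det2 (deriv f s) (deriv (deriv f) s))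
    (hκg : ∀ s, κg s = det2 (deriv g s) (deriv (deriv g) s))
    (hpar : ∀ᶠ s in nhds s₀, deriv f s = deriv g (t s))
    (hg0 : κg (t s₀) ≠ 0)
    (h : ℝ → ℝ × ℝ) (hh : ∀ s, h s = f s - g (t s)) :
    deriv h s₀ = 0 ↔ κf s₀ = κg (t s₀) := by
  have hfd : Differentiable ℝ f := hf.differentiable (by simp)
  have hgd : Differentiable ℝ g := hg.differentiable (by simp)
  have htd : Differentiable ℝ t := ht.differentiable (by simp)
  have hg' : ContDiff ℝ (⊤ : ℕ∞) g := hg.of_le (by simp)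
  have hgd' : Differentiable ℝ (deriv g) :=
    ((contDiff_infty_iff_deriv.mp hg').2).differentiable (by simp)
  set a := deriv t s₀ with ha
  set v := deriv g (t s₀) with hv
  set w := deriv (deriv g) (t s₀) with hw
  -- f'(s₀) = v
  have hfv : deriv f s₀ = v := hpar.self_of_nhds
  -- derivative of g ∘ t
  have hgt : HasDerivAt (fun s => g (t s)) (a • v) s₀ :=
    (hgd (t s₀)).hasDerivAt.scomp s₀ (htd s₀).hasDerivAt
  -- derivative of h
  have hhd : deriv h s₀ = (1 - a) • v := by
    have heq : h = fun s => f s - g (t s) := funext hh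
    have : HasDerivAt h (deriv f s₀ - a • v) s₀ := by
      rw [heq]; exact ((hfd s₀).hasDerivAt).sub hgt
    rw [this.deriv, hfv, sub_smul, one_smul]
  -- second derivative of f at s₀
  have hff : deriv (deriv f) s₀ = a • w := by
    have h1 : deriv (deriv f) s₀ = deriv (fun s => deriv g (t s)) s₀ :=
      Filter.EventuallyEq.deriv_eq hpar
    have h2 : HasDerivAt (fun s => deriv g (t s)) (a • w) s₀ :=
      (hgd' (t s₀)).hasDerivAt.scomp s₀ (htd s₀).hasDerivAt
    rw [h1, h2.deriv]
  -- κf s₀ = a * κg (t s₀)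
  have hκ : κf s₀ = a * κg (t s₀) := by
    rw [hκf, hκg, hfv, hff]
    simp only [det2, Prod.smul_fst, Prod.smul_snd, smul_eq_mul]
    ring
  -- v ≠ 0
  have hvne : v ≠ 0 := by
    intro h0
    have := hgu (t s₀)
    rw [← hv, h0] at this
    simp [norm2] at this
  constructor
  · intro h0
    rw [hhd] at h0
    rcases smul_eq_zero.mp h0 with h1 | h1
    · have : a = 1 := by linarith [h1]
      rw [hκ, this, one_mul]
    · exact absurd h1 hvne
  · intro h0
    have ha1 : a = 1 := by
      rw [hκ] at h0
      exact mul_right_cancel₀ hg0 (h0.trans (one_mul _).symm)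
    rw [hhd, ha1, sub_self, zero_smul]
end

section
/- Let f : ℝ → ℝ² be a smooth unit-speed plane curve with signed curvature κ(s) = det(f'(s), f''(s)). Suppose κ(s₀) = 0 and κ'(s₀) ≠ 0 (a nondegenerate inflexion point). Then the origin (0,0) lies in the closure of the set { f(s) − f(u) : s ≠ u, det(f'(s), f'(u)) = 0, f(s) ≠ f(u) }. More precisely, for every ε > 0 there exist s ≠ u with |s − s₀| < ε and |u − s₀| < ε such that det(f'(s), f'(u)) = 0 and 0 < ‖f(s) − f(u)‖ < ε. (The secant caustic of a regular closed curve passes through the origin at each inflexion point of the curve.) -/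
open Set Filter Topology
open scoped ContDiff

/-- First component of a curve has derivative the first component of the derivative. -/
lemma hasDerivAt_fst' {g : ℝ → ℝ × ℝ} {g' : ℝ × ℝ} {t : ℝ} (h : HasDerivAt g g' t) :
    HasDerivAt (fun t => (g t).1) g'.1 t :=
  ((hasFDerivAt_fst (p := g t)).comp_hasDerivAt t h)

lemma hasDerivAt_snd' {g : ℝ → ℝ × ℝ} {g' : ℝ × ℝ} {t : ℝ} (h : HasDerivAt g g' t) :
    HasDerivAt (fun t => (g t).2) g'.2 t :=
  ((hasFDerivAt_snd (p := g t)).comp_hasDerivAt t h)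

/-- If `p` is differentiable with `p'(s₀)=0` and `p''(s₀)>0`, then for every `δ>0`
there are `s < s₀ < u` within `δ` of `s₀` with `p s = p u`. -/
lemma keyPos (p : ℝ → ℝ) (hp : Differentiable ℝ p) (s₀ : ℝ)
    (c : ℝ) (hder : HasDerivAt (deriv p) c s₀)
    (h1 : deriv p s₀ = 0) (hc : 0 < c) (δ : ℝ) (hδ : 0 < δ) :
    ∃ s u : ℝ, s₀ - δ < s ∧ s < s₀ ∧ s₀ < u ∧ u < s₀ + δ ∧ p s = p u := by
  have hslope : Tendsto (slope (deriv p) s₀) (𝓝[≠] s₀) (𝓝 c) :=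
    hasDerivAt_iff_tendsto_slope.mp hder
  have hev : ∀ᶠ t in 𝓝[≠] s₀, 0 < slope (deriv p) s₀ t :=
    hslope.eventually (eventually_gt_nhds hc)
  rw [eventually_nhdsWithin_iff] at hev
  rw [Metric.eventually_nhds_iff] at hev
  obtain ⟨δ', hδ', hsl⟩ := hev
  -- sign of deriv p on both sides
  have hsign : ∀ t : ℝ, dist t s₀ < δ' → t ≠ s₀ →
      0 < slope (deriv p) s₀ t := fun t h1 h2 => hsl h1 h2
  have hpos : ∀ t : ℝ, s₀ < t → dist t s₀ < δ' → 0 < deriv p t := by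
    intro t ht hd
    have := hsign t hd (by linarith)
    rw [slope_def_field] at this
    have h2 : (0:ℝ) < t - s₀ := by linarith
    have := mul_pos this h2
    rw [div_mul_cancel₀] at this
    · simpa [h1] using this
    · exact ne_of_gt h2
  have hneg : ∀ t : ℝ, t < s₀ → dist t s₀ < δ' → deriv p t < 0 := by
    intro t ht hd
    have := hsign t hd (by linarith)
    rw [slope_def_field] at this
    have h2 : t - s₀ < (0:ℝ) := by linarith
    have := mul_neg_of_pos_of_neg this h2
    rw [div_mul_cancel₀] at this
    · simpa [h1] using this
    · exact ne_of_lt h2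
  set r := min δ δ' with hr
  have hrpos : 0 < r := lt_min hδ hδ'
  set a := s₀ - r / 2 with ha
  set b := s₀ + r / 2 with hb
  have hcont : Continuous p := hp.continuous
  have hmono : StrictMonoOn p (Icc s₀ b) := by
    apply strictMonoOn_of_deriv_pos (convex_Icc _ _) (hcont.continuousOn)
    intro x hx
    rw [interior_Icc] at hx
    exact hpos x hx.1 (by
      rw [Real.dist_eq, abs_of_pos (by linarith [hx.1])]
      have : x < b := hx.2
      have : r ≤ δ' := min_le_right _ _
      simp only [hb] at *
      linarith)
  have hanti : StrictAntiOn p (Icc a s₀) := by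
    apply strictAntiOn_of_deriv_neg (convex_Icc _ _) (hcont.continuousOn)
    intro x hx
    rw [interior_Icc] at hx
    exact hneg x hx.2 (by
      rw [Real.dist_eq, abs_of_neg (by linarith [hx.2])]
      have : a < x := hx.1
      have : r ≤ δ' := min_le_right _ _
      simp only [ha] at *
      linarith)
  have hab : a < s₀ := by simp only [ha]; linarith
  have hbb : s₀ < b := by simp only [hb]; linarith
  have hpa : p s₀ < p a := hanti (left_mem_Icc.mpr hab.le) (right_mem_Icc.mpr hab.le) hab
  have hpb : p s₀ < p b := hmono (left_mem_Icc.mpr hbb.le) (right_mem_Icc.mpr hbb.le) hbb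
  set m := min (p a) (p b) with hm
  have hmgt : p s₀ < m := lt_min hpa hpb
  set c₀ := (p s₀ + m) / 2 with hc₀
  have hc₀1 : p s₀ < c₀ := by simp only [hc₀]; linarith
  have hc₀2 : c₀ < m := by simp only [hc₀]; linarith
  -- IVT on [a, s₀]
  have hIVT1 : c₀ ∈ p '' Icc a s₀ := by
    apply intermediate_value_Icc' hab.le hcont.continuousOn
    exact ⟨hc₀1.le, le_trans hc₀2.le (min_le_left _ _)⟩
  have hIVT2 : c₀ ∈ p '' Icc s₀ b := by
    apply intermediate_value_Icc hbb.le hcont.continuousOn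
    exact ⟨hc₀1.le, le_trans hc₀2.le (min_le_right _ _)⟩
  obtain ⟨s, hs, hps⟩ := hIVT1
  obtain ⟨u, hu, hpu⟩ := hIVT2
  have hsne : s ≠ s₀ := fun h => by rw [h] at hps; exact absurd hps (ne_of_lt hc₀1)
  have hune : u ≠ s₀ := fun h => by rw [h] at hpu; exact absurd hpu (ne_of_lt hc₀1)
  have hrδ : r ≤ δ := min_le_left _ _
  refine ⟨s, u, ?_, lt_of_le_of_ne hs.2 hsne, lt_of_le_of_ne hu.1 (Ne.symm hune), ?_, by rw [hps, hpu]⟩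
  · have := hs.1; simp only [ha] at this; linarith
  · have := hu.2; simp only [hb] at this; linarith

lemma key (p : ℝ → ℝ) (hp : Differentiable ℝ p) (s₀ : ℝ)
    (c : ℝ) (hder : HasDerivAt (deriv p) c s₀)
    (h1 : deriv p s₀ = 0) (hc : c ≠ 0) (δ : ℝ) (hδ : 0 < δ) :
    ∃ s u : ℝ, s₀ - δ < s ∧ s < s₀ ∧ s₀ < u ∧ u < s₀ + δ ∧ p s = p u := by
  rcases hc.lt_or_gt with h | h
  · have hneg : Differentiable ℝ (fun t => -p t) := hp.neg
    have hderiv : deriv (fun t => -p t) = fun t => -deriv p t := by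
      funext t; exact deriv.fun_neg
    obtain ⟨s, u, h1', h2', h3', h4', h5'⟩ := keyPos (fun t => -p t) hneg s₀ (-c)
      (by rw [hderiv]; exact hder.neg) (by rw [hderiv]; simp [h1]) (by linarith) δ hδ
    exact ⟨s, u, h1', h2', h3', h4', by simpa using h5'⟩
  · exact keyPos p hp s₀ c hder h1 h δ hδ


/-- The auxiliary "sine" function relative to a direction `v`. -/
noncomputable def Pfun (f : ℝ → ℝ × ℝ) (v : ℝ × ℝ) (t : ℝ) : ℝ :=
  v.1 * (deriv f t).2 - v.2 * (deriv f t).1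

/-- The auxiliary "cosine" function relative to a direction `v`. -/
noncomputable def Qfun (f : ℝ → ℝ × ℝ) (v : ℝ × ℝ) (t : ℝ) : ℝ :=
  v.1 * (deriv f t).1 + v.2 * (deriv f t).2

set_option maxHeartbeats 2000000 in
/-- The secant caustic passes through the origin at a (nondegenerate) inflexion
point of the curve. -/
theorem secant_caustic_through_origin_at_inflexion
    (f : ℝ → ℝ × ℝ) (s₀ : ℝ)
    (hf : ContDiff ℝ (⊤ : ℕ∞) f) (hfu : ∀ s, norm2 (deriv f s) = 1)
    (κ : ℝ → ℝ) (hκ : ∀ s, κ s = det2 (deriv f s) (deriv (deriv f) s))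
    (h0 : κ s₀ = 0) (h1 : deriv κ s₀ ≠ 0) :
    (0 : ℝ × ℝ) ∈ closure {x : ℝ × ℝ | ∃ s u : ℝ, s ≠ u ∧
        det2 (deriv f s) (deriv f u) = 0 ∧ f s ≠ f u ∧ x = f s - f u} ∧
    ∀ ε > 0, ∃ s u : ℝ, s ≠ u ∧ |s - s₀| < ε ∧ |u - s₀| < ε ∧
      det2 (deriv f s) (deriv f u) = 0 ∧
      0 < norm2 (f s - f u) ∧ norm2 (f s - f u) < ε := by
  have hsm : ContDiff ℝ (∞ : WithTop ℕ∞) f := hf.of_le (by simp)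
  obtain ⟨hd0, h1'⟩ := contDiff_infty_iff_deriv.mp hsm
  obtain ⟨hd1, h2'⟩ := contDiff_infty_iff_deriv.mp h1'
  obtain ⟨hd2, h3'⟩ := contDiff_infty_iff_deriv.mp h2'
  set v : ℝ × ℝ := deriv f s₀ with hv
  -- unit speed in squared form
  have hu : ∀ t, (deriv f t).1 ^ 2 + (deriv f t).2 ^ 2 = 1 := by
    intro t
    have h := hfu t
    unfold norm2 at h
    have hnn : (0:ℝ) ≤ (deriv f t).1 ^ 2 + (deriv f t).2 ^ 2 := by positivity
    nlinarith [Real.sq_sqrt hnn]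
  have hvunit : v.1 ^ 2 + v.2 ^ 2 = 1 := hu s₀
  -- derivative facts for P
  have hPd : ∀ t, HasDerivAt (Pfun f v)
      (v.1 * (deriv (deriv f) t).2 - v.2 * (deriv (deriv f) t).1) t := by
    intro t
    have h := (hd1 t).hasDerivAt
    exact ((hasDerivAt_snd' h).const_mul v.1).sub ((hasDerivAt_fst' h).const_mul v.2)
  have hPdiff : Differentiable ℝ (Pfun f v) := fun t => (hPd t).differentiableAt
  have hPderiv : deriv (Pfun f v) = fun t =>
      v.1 * (deriv (deriv f) t).2 - v.2 * (deriv (deriv f) t).1 :=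
    funext fun t => (hPd t).deriv
  have hPs₀ : deriv (Pfun f v) s₀ = 0 := by
    rw [hPderiv]
    have h := hκ s₀
    unfold det2 at h
    rw [h0] at h
    exact h.symm
  -- second derivative of P at s₀
  set C : ℝ := v.1 * (deriv (deriv (deriv f)) s₀).2 - v.2 * (deriv (deriv (deriv f)) s₀).1
      with hC
  have hP2 : HasDerivAt (deriv (Pfun f v)) C s₀ := by
    rw [hPderiv]
    have h := (hd2 s₀).hasDerivAt
    exact ((hasDerivAt_snd' h).const_mul v.1).sub ((hasDerivAt_fst' h).const_mul v.2)
  -- C equals deriv κ s₀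
  have hκfun : κ = fun t => (deriv f t).1 * (deriv (deriv f) t).2
      - (deriv f t).2 * (deriv (deriv f) t).1 := by
    funext t; exact hκ t
  have hκd : HasDerivAt κ
      ((deriv (deriv f) s₀).1 * (deriv (deriv f) s₀).2
        + (deriv f s₀).1 * (deriv (deriv (deriv f)) s₀).2
        - ((deriv (deriv f) s₀).2 * (deriv (deriv f) s₀).1
        + (deriv f s₀).2 * (deriv (deriv (deriv f)) s₀).1)) s₀ := by
    rw [hκfun]
    have ha := (hd1 s₀).hasDerivAt
    have hb := (hd2 s₀).hasDerivAt
    exact ((hasDerivAt_fst' ha).mul (hasDerivAt_snd' hb)).sub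
      ((hasDerivAt_snd' ha).mul (hasDerivAt_fst' hb))
  have hCne : C ≠ 0 := by
    have h2 : deriv κ s₀ = C := by rw [hκd.deriv, hC, hv]; ring
    rw [← h2]; exact h1
  -- continuity of Q and lower bound near s₀
  have hc1 : Continuous (deriv f) := h1'.continuous
  have hQcont : Continuous (Qfun f v) := by
    unfold Qfun
    exact (continuous_const.mul hc1.fst).add (continuous_const.mul hc1.snd)
  have hQs₀ : Qfun f v s₀ = 1 := by
    unfold Qfun; rw [← hv]; nlinarith [hvunit]
  have hQev : ∀ᶠ t in 𝓝 s₀, 1 / 2 < Qfun f v t := by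
    have := hQcont.continuousAt (x := s₀)
    rw [ContinuousAt, hQs₀] at this
    exact this.eventually (eventually_gt_nhds (by norm_num))
  rw [Metric.eventually_nhds_iff] at hQev
  obtain ⟨δ₀, hδ₀, hQlow⟩ := hQev
  -- main quantitative statement
  have main : ∀ ε > 0, ∃ s u : ℝ, s ≠ u ∧ |s - s₀| < ε ∧ |u - s₀| < ε ∧
      det2 (deriv f s) (deriv f u) = 0 ∧
      0 < norm2 (f s - f u) ∧ norm2 (f s - f u) < ε := by
    intro ε hε
    set δ : ℝ := min δ₀ (ε / 4) with hδdef
    have hδpos : 0 < δ := lt_min hδ₀ (by linarith)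
    obtain ⟨s, u, hs1, hs2, hu1, hu2, hPsu⟩ :=
      key (Pfun f v) hPdiff s₀ C hP2 hPs₀ hCne δ hδpos
    have hδδ₀ : δ ≤ δ₀ := min_le_left _ _
    have hδε : δ ≤ ε / 4 := min_le_right _ _
    have hsu : s < u := lt_trans hs2 hu1
    -- Q bounds on [s, u]
    have hQmid : ∀ t, s ≤ t → t ≤ u → 1 / 2 < Qfun f v t := by
      intro t hts htu
      apply hQlow
      rw [Real.dist_eq, abs_lt]
      constructor <;> [linarith; linarith]
    have hQs : 1 / 2 < Qfun f v s := hQmid s le_rfl hsu.le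
    have hQu : 1 / 2 < Qfun f v u := hQmid u hsu.le le_rfl
    -- P² + Q² = 1
    have hPQ : ∀ t, Qfun f v t ^ 2 + Pfun f v t ^ 2 = 1 := by
      intro t
      have h := hu t
      unfold Pfun Qfun
      linear_combination ((deriv f t).1 ^ 2 + (deriv f t).2 ^ 2) * hvunit + h
    have hQeq : Qfun f v s = Qfun f v u := by
      have h2 : Qfun f v s ^ 2 = Qfun f v u ^ 2 := by
        have ha := hPQ s; have hb := hPQ u
        rw [hPsu] at ha; linarith
      have h3 : (Qfun f v s - Qfun f v u) * (Qfun f v s + Qfun f v u) = 0 := by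
        linear_combination h2
      rcases mul_eq_zero.mp h3 with h4 | h4
      · linarith
      · linarith
    -- determinant vanishes
    have hdet : det2 (deriv f s) (deriv f u) = 0 := by
      have hid : det2 (deriv f s) (deriv f u)
          = Qfun f v s * Pfun f v u - Pfun f v s * Qfun f v u := by
        unfold det2 Pfun Qfun
        linear_combination (-((deriv f s).1 * (deriv f u).2
          - (deriv f s).2 * (deriv f u).1)) * hvunit
      rw [hid, hPsu, hQeq]; ring
    -- f s ≠ f u via strict monotonicity of the height function
    have hHd : ∀ t, HasDerivAt (fun t => v.1 * (f t).1 + v.2 * (f t).2)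
        (Qfun f v t) t := by
      intro t
      have h := (hd0 t).hasDerivAt
      exact ((hasDerivAt_fst' h).const_mul v.1).add ((hasDerivAt_snd' h).const_mul v.2)
    have hHmono : StrictMonoOn (fun t => v.1 * (f t).1 + v.2 * (f t).2) (Icc s u) := by
      apply strictMonoOn_of_deriv_pos (convex_Icc _ _)
      · exact ((continuous_const.mul hd0.continuous.fst).add
          (continuous_const.mul hd0.continuous.snd)).continuousOn
      · intro x hx
        rw [interior_Icc] at hx
        rw [(hHd x).deriv]
        exact lt_trans (by norm_num) (hQmid x hx.1.le hx.2.le)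
    have hHlt : v.1 * (f s).1 + v.2 * (f s).2 < v.1 * (f u).1 + v.2 * (f u).2 :=
      hHmono (left_mem_Icc.mpr hsu.le) (right_mem_Icc.mpr hsu.le) hsu
    have hfne : f s ≠ f u := by
      intro h
      rw [h] at hHlt
      exact lt_irrefl _ hHlt
    -- positivity of norm2
    have hw1 : (f s - f u).1 = (f s).1 - (f u).1 := rfl
    have hw2 : (f s - f u).2 = (f s).2 - (f u).2 := rfl
    have hwne : (f s).1 ≠ (f u).1 ∨ (f s).2 ≠ (f u).2 := by
      by_contra h
      push_neg at h
      exact hfne (Prod.ext h.1 h.2)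
    have hnpos : 0 < norm2 (f s - f u) := by
      unfold norm2
      apply Real.sqrt_pos.mpr
      rw [hw1, hw2]
      rcases hwne with h | h
      · have : 0 < ((f s).1 - (f u).1) ^ 2 := sq_pos_of_ne_zero (sub_ne_zero_of_ne h)
        nlinarith [sq_nonneg ((f s).2 - (f u).2)]
      · have : 0 < ((f s).2 - (f u).2) ^ 2 := sq_pos_of_ne_zero (sub_ne_zero_of_ne h)
        nlinarith [sq_nonneg ((f s).1 - (f u).1)]
    -- upper bound on norm2
    have hbound1 : |(f u).1 - (f s).1| ≤ 1 * |u - s| := by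
      have := Convex.norm_image_sub_le_of_norm_hasDerivWithin_le
        (f := fun t => (f t).1) (f' := fun t => (deriv f t).1) (C := 1) (s := univ)
        (fun x _ => (hasDerivAt_fst' (hd0 x).hasDerivAt).hasDerivWithinAt)
        (fun x _ => by
          rw [Real.norm_eq_abs, abs_le]
          constructor <;> nlinarith [hu x, sq_nonneg ((deriv f x).2)])
        convex_univ (mem_univ s) (mem_univ u)
      simpa [Real.norm_eq_abs] using this
    have hbound2 : |(f u).2 - (f s).2| ≤ 1 * |u - s| := by
      have := Convex.norm_image_sub_le_of_norm_hasDerivWithin_le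
        (f := fun t => (f t).2) (f' := fun t => (deriv f t).2) (C := 1) (s := univ)
        (fun x _ => (hasDerivAt_snd' (hd0 x).hasDerivAt).hasDerivWithinAt)
        (fun x _ => by
          rw [Real.norm_eq_abs, abs_le]
          constructor <;> nlinarith [hu x, sq_nonneg ((deriv f x).1)])
        convex_univ (mem_univ s) (mem_univ u)
      simpa [Real.norm_eq_abs] using this
    have husδ : |u - s| < 2 * δ := by
      rw [abs_lt]; constructor <;> linarith
    have hnorm2le : norm2 (f s - f u) ≤ |(f s - f u).1| + |(f s - f u).2| := by
      unfold norm2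
      have h2 : (f s - f u).1 ^ 2 + (f s - f u).2 ^ 2
          ≤ (|(f s - f u).1| + |(f s - f u).2|) ^ 2 := by
        nlinarith [abs_nonneg ((f s - f u).1), abs_nonneg ((f s - f u).2),
          sq_abs ((f s - f u).1), sq_abs ((f s - f u).2)]
      calc Real.sqrt ((f s - f u).1 ^ 2 + (f s - f u).2 ^ 2)
          ≤ Real.sqrt ((|(f s - f u).1| + |(f s - f u).2|) ^ 2) := Real.sqrt_le_sqrt h2
        _ = |(f s - f u).1| + |(f s - f u).2| := Real.sqrt_sq (by positivity)
    have hlt : norm2 (f s - f u) < ε := by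
      have e1 : |(f s - f u).1| ≤ 1 * |u - s| := by rw [hw1, abs_sub_comm]; exact hbound1
      have e2 : |(f s - f u).2| ≤ 1 * |u - s| := by rw [hw2, abs_sub_comm]; exact hbound2
      linarith [hnorm2le, husδ, hδε]
    exact ⟨s, u, ne_of_lt hsu, by rw [abs_lt]; constructor <;> linarith,
      by rw [abs_lt]; constructor <;> linarith, hdet, hnpos, hlt⟩
  refine ⟨?_, main⟩
  rw [Metric.mem_closure_iff]
  intro ε hε
  obtain ⟨s, u, hne, _, _, hdet, hpos, hlt⟩ := main ε hε
  have hfne : f s ≠ f u := by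
    intro h
    rw [h] at hpos
    simp [norm2, sub_self] at hpos
  refine ⟨f s - f u, ⟨s, u, hne, hdet, hfne, rfl⟩, ?_⟩
  rw [dist_eq_norm, zero_sub, norm_neg, Prod.norm_def]
  have k1 : ‖(f s - f u).1‖ ≤ norm2 (f s - f u) := by
    rw [Real.norm_eq_abs, ← Real.sqrt_sq_eq_abs]
    exact Real.sqrt_le_sqrt (by nlinarith [sq_nonneg ((f s - f u).2)])
  have k2 : ‖(f s - f u).2‖ ≤ norm2 (f s - f u) := by
    rw [Real.norm_eq_abs, ← Real.sqrt_sq_eq_abs]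
    exact Real.sqrt_le_sqrt (by nlinarith [sq_nonneg ((f s - f u).1)])
  exact max_lt (lt_of_le_of_lt k1 hlt) (lt_of_le_of_lt k2 hlt)
end

section
/- Let f : [s₀, s₁] → ℝ² and g : ℝ → ℝ² be smooth unit-speed plane curves with signed curvatures κ_f and κ_g, and let t : [s₀, s₁] → ℝ be a smooth function with f'(s) = g'(t(s)) for all s ∈ [s₀, s₁]. Assume κ_g(t(s)) > 0 for all s ∈ [s₀, s₁], and assume the curvature condition (κ_f(s₀) − κ_g(t(s₀))) · (κ_f(s₁) − κ_g(t(s₁))) < 0. Then there exists s ∈ (s₀, s₁) with κ_f(s) = κ_g(t(s)); at such s the derivative of the map s ↦ f(s) − g(t(s)) vanishes, so both f(s) − g(t(s)) and g(t(s)) − f(s) are singular points of the secant caustic of the union of the two arcs. In particular the secant caustic has at least two singular points. -/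
/-- If the endpoint curvature differences have opposite signs, then the secant
caustic of the union of the two arcs has a singular point. -/
theorem secant_caustic_singular_point_exists
    (s₀ s₁ : ℝ) (hs : s₀ < s₁)
    (f g : ℝ → ℝ × ℝ) (t : ℝ → ℝ)
    (hf : ContDiff ℝ (⊤ : ℕ∞) f) (hg : ContDiff ℝ (⊤ : ℕ∞) g) (ht : ContDiff ℝ (⊤ : ℕ∞) t)
    (hfu : ∀ s ∈ Set.Icc s₀ s₁, norm2 (deriv f s) = 1)
    (hgu : ∀ τ : ℝ, norm2 (deriv g τ) = 1)
    (κf κg : ℝ → ℝ)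
    (hκf : ∀ s, κf s = det2 (deriv f s) (deriv (deriv f) s))
    (hκg : ∀ s, κg s = det2 (deriv g s) (deriv (deriv g) s))
    (hpar : ∀ s ∈ Set.Icc s₀ s₁, deriv f s = deriv g (t s))
    (hκgpos : ∀ s ∈ Set.Icc s₀ s₁, 0 < κg (t s))
    (hcond : (κf s₀ - κg (t s₀)) * (κf s₁ - κg (t s₁)) < 0) :
    ∃ s ∈ Set.Ioo s₀ s₁, κf s = κg (t s) ∧
      deriv (fun x => f x - g (t x)) s = 0 := by
  have hf' : ContDiff ℝ (⊤ : ℕ∞) f := hf.of_le (by simp)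
  have hg' : ContDiff ℝ (⊤ : ℕ∞) g := hg.of_le (by simp)
  have ht' : ContDiff ℝ (⊤ : ℕ∞) t := ht.of_le (by simp)
  have hf1 : ContDiff ℝ (⊤ : ℕ∞) (deriv f) := (contDiff_infty_iff_deriv.mp hf').2
  have hg1 : ContDiff ℝ (⊤ : ℕ∞) (deriv g) := (contDiff_infty_iff_deriv.mp hg').2
  have cf1 : Continuous (deriv f) := hf1.continuous
  have cf2 : Continuous (deriv (deriv f)) := (contDiff_infty_iff_deriv.mp hf1).2.continuous
  have cg1 : Continuous (deriv g) := hg1.continuous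
  have cg2 : Continuous (deriv (deriv g)) := (contDiff_infty_iff_deriv.mp hg1).2.continuous
  have ct : Continuous t := ht'.continuous
  have hcont : Continuous (fun s => κf s - κg (t s)) := by
    simp only [hκf, hκg, det2]
    fun_prop
  -- find the zero via IVT
  have hzero : ∃ s ∈ Set.Ioo s₀ s₁, κf s - κg (t s) = 0 := by
    rcases mul_neg_iff.mp hcond with ⟨h0, h1⟩ | ⟨h0, h1⟩
    · have := intermediate_value_Ioo' hs.le (hcont.continuousOn)
      have h0mem : (0 : ℝ) ∈ Set.Ioo (κf s₁ - κg (t s₁)) (κf s₀ - κg (t s₀)) :=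
        ⟨h1, h0⟩
      rcases this h0mem with ⟨s, hsmem, hval⟩
      exact ⟨s, hsmem, hval⟩
    · have := intermediate_value_Ioo hs.le (hcont.continuousOn)
      have h0mem : (0 : ℝ) ∈ Set.Ioo (κf s₀ - κg (t s₀)) (κf s₁ - κg (t s₁)) :=
        ⟨h0, h1⟩
      rcases this h0mem with ⟨s, hsmem, hval⟩
      exact ⟨s, hsmem, hval⟩
  obtain ⟨s, hsmem, hval⟩ := hzero
  have hsIcc : s ∈ Set.Icc s₀ s₁ := Set.Ioo_subset_Icc_self hsmem
  have hκeq : κf s = κg (t s) := by linarith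
  refine ⟨s, hsmem, hκeq, ?_⟩
  have hnhds : Set.Icc s₀ s₁ ∈ nhds s := Icc_mem_nhds hsmem.1 hsmem.2
  have hev : deriv f =ᶠ[nhds s] fun x => deriv g (t x) :=
    Filter.eventuallyEq_of_mem hnhds (fun x hx => hpar x hx)
  have hdt : HasDerivAt t (deriv t s) s :=
    ((ht'.differentiable (by simp)) s).hasDerivAt
  have hdg2 : HasDerivAt (deriv g) (deriv (deriv g) (t s)) (t s) :=
    ((hg1.differentiable (by simp)) (t s)).hasDerivAt
  have hcomp : HasDerivAt (fun x => deriv g (t x))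
      (deriv t s • deriv (deriv g) (t s)) s := hdg2.scomp s hdt
  have e1 : deriv (deriv f) s = deriv t s • deriv (deriv g) (t s) := by
    rw [hev.deriv_eq, hcomp.deriv]
  have e2 : κf s = deriv t s * κg (t s) := by
    rw [hκf, hκg, e1, hpar s hsIcc]
    simp only [det2, Prod.smul_fst, Prod.smul_snd, smul_eq_mul]
    ring
  have hκgpos' := hκgpos s hsIcc
  have hdt1 : deriv t s = 1 := by
    have : κg (t s) = deriv t s * κg (t s) := by rw [← e2, hκeq]
    nlinarith
  have hdg1 : HasDerivAt g (deriv g (t s)) (t s) :=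
    ((hg'.differentiable (by simp)) (t s)).hasDerivAt
  have hcompg : HasDerivAt (fun x => g (t x)) (deriv t s • deriv g (t s)) s :=
    hdg1.scomp s hdt
  have hdf : HasDerivAt f (deriv f s) s :=
    ((hf'.differentiable (by simp)) s).hasDerivAt
  have : HasDerivAt (fun x => f x - g (t x))
      (deriv f s - deriv t s • deriv g (t s)) s := hdf.sub hcompg
  rw [this.deriv, hdt1, one_smul, hpar s hsIcc, sub_self]
end

section
/- Let f = (f₁, f₂) : [0, L₁] → ℝ² and g = (g₁, g₂) : [0, L₂] → ℝ² be C¹ plane curves, and let t : [0, L₁] → [0, L₂] be a C¹ function with t(0) = 0, t(L₁) = L₂ and g'(t(s)) = f'(s) for all s ∈ [0, L₁]. Assume f₁'(s) ≥ 0 and f₂'(s) ≥ 0 for all s, and assume the endpoint conditions f₁(L₁) − f₁(0) = 1, f₂(L₁) − f₂(0) < 1, g₂(L₂) − g₂(0) = 1, and g₁(L₂) − g₁(0) < 1. Then there exists s ∈ [0, L₁] with t'(s) = 1; at such s the derivative of the map s ↦ f(s) − g(t(s)) vanishes, so the secant caustic of the union of the two arcs has at least two singular points (the point f(s) − g(t(s))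 and its negative). -/
/-- Normalized (unit-square) form of the theorem on singular points of the secant
caustic of two arcs inscribed in a parallelogram. -/
theorem secant_caustic_singular_point_unit_square
    (L₁ L₂ : ℝ) (hL₁ : 0 < L₁) (hL₂ : 0 < L₂)
    (f g : ℝ → ℝ × ℝ) (t : ℝ → ℝ)
    (hf : ContDiff ℝ 1 f) (hg : ContDiff ℝ 1 g) (ht : ContDiff ℝ 1 t)
    (ht0 : t 0 = 0) (htL : t L₁ = L₂)
    (hmaps : ∀ s ∈ Set.Icc (0 : ℝ) L₁, t s ∈ Set.Icc (0 : ℝ) L₂)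
    (hpar : ∀ s ∈ Set.Icc (0 : ℝ) L₁, deriv g (t s) = deriv f s)
    (hmono : ∀ s ∈ Set.Icc (0 : ℝ) L₁, 0 ≤ (deriv f s).1 ∧ 0 ≤ (deriv f s).2)
    (he1 : (f L₁).1 - (f 0).1 = 1) (he2 : (f L₁).2 - (f 0).2 < 1)
    (he3 : (g L₂).2 - (g 0).2 = 1) (he4 : (g L₂).1 - (g 0).1 < 1) :
    ∃ s ∈ Set.Icc (0 : ℝ) L₁, deriv t s = 1 ∧
      deriv (fun x => f x - g (t x)) s = 0 := by
  have hfd : Differentiable ℝ f := hf.differentiable one_ne_zero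
  have hgd : Differentiable ℝ g := hg.differentiable one_ne_zero
  have htd : Differentiable ℝ t := ht.differentiable one_ne_zero
  have key : ∀ s : ℝ, HasDerivAt (fun x => f x - g (t x))
      (deriv f s - deriv t s • deriv g (t s)) s := by
    intro s
    exact (hfd s).hasDerivAt.sub
      (((hgd (t s)).hasDerivAt).scomp s ((htd s).hasDerivAt))
  -- first coordinate
  have key1 : ∀ s : ℝ, HasDerivAt (fun x => (f x).1 - (g (t x)).1)
      ((deriv f s).1 - deriv t s * (deriv g (t s)).1) s := by
    intro s
    have := (key s).hasFDerivAt.fst.hasDerivAt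
    simpa using this
  have key2 : ∀ s : ℝ, HasDerivAt (fun x => (f x).2 - (g (t x)).2)
      ((deriv f s).2 - deriv t s * (deriv g (t s)).2) s := by
    intro s
    have := (key s).hasFDerivAt.snd.hasDerivAt
    simpa using this
  obtain ⟨c₁, hc₁, hc₁'⟩ := exists_hasDerivAt_eq_slope
    (fun x => (f x).1 - (g (t x)).1)
    (fun s => (deriv f s).1 - deriv t s * (deriv g (t s)).1) hL₁
    (Continuous.continuousOn (by fun_prop)) (fun x _ => key1 x)
  obtain ⟨c₂, hc₂, hc₂'⟩ := exists_hasDerivAt_eq_slope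
    (fun x => (f x).2 - (g (t x)).2)
    (fun s => (deriv f s).2 - deriv t s * (deriv g (t s)).2) hL₁
    (Continuous.continuousOn (by fun_prop)) (fun x _ => key2 x)
  rw [ht0, htL] at hc₁' hc₂'
  have hc₁I : c₁ ∈ Set.Icc (0:ℝ) L₁ := Set.Ioo_subset_Icc_self hc₁
  have hc₂I : c₂ ∈ Set.Icc (0:ℝ) L₁ := Set.Ioo_subset_Icc_self hc₂
  have hlt1 : deriv t c₁ < 1 := by
    have hp := hpar c₁ hc₁I
    rw [hp] at hc₁'
    have hpos : (deriv f c₁).1 - deriv t c₁ * (deriv f c₁).1 > 0 := by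
      rw [hc₁']
      have hnum : (0:ℝ) < ((f L₁).1 - (g L₂).1 - ((f 0).1 - (g 0).1)) := by linarith
      have hden : (0:ℝ) < L₁ - 0 := by linarith
      exact div_pos hnum hden
    have h0 := (hmono c₁ hc₁I).1
    nlinarith
  have hgt1 : 1 < deriv t c₂ := by
    have hp := hpar c₂ hc₂I
    rw [hp] at hc₂'
    have hneg : (deriv f c₂).2 - deriv t c₂ * (deriv f c₂).2 < 0 := by
      rw [hc₂']
      have hnum : ((f L₁).2 - (g L₂).2 - ((f 0).2 - (g 0).2)) < 0 := by linarith
      exact div_neg_of_neg_of_pos hnum (by linarith)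
    have h0 := (hmono c₂ hc₂I).2
    nlinarith
  -- intermediate value
  have hcont : ContinuousOn (deriv t) (Set.uIcc c₁ c₂) :=
    (ht.continuous_deriv le_rfl).continuousOn
  have hmem : (1:ℝ) ∈ Set.uIcc (deriv t c₁) (deriv t c₂) :=
    Set.mem_uIcc.2 (Or.inl ⟨hlt1.le, hgt1.le⟩)
  obtain ⟨s, hs, hts⟩ := intermediate_value_uIcc hcont hmem
  have hsI : s ∈ Set.Icc (0:ℝ) L₁ := by
    have : Set.uIcc c₁ c₂ ⊆ Set.Icc (0:ℝ) L₁ := Set.uIcc_subset_Icc hc₁I hc₂I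
    exact this hs
  refine ⟨s, hsI, hts, ?_⟩
  rw [(key s).deriv, hts, hpar s hsI, one_smul, sub_self]
end

section
/- Let p : ℝ → ℝ be a smooth function and let γ_p : ℝ → ℝ² be the hedgehog parametrization γ_p(θ) = (p(θ)cos θ − p'(θ)sin θ, p(θ)sin θ + p'(θ)cos θ). Then for every positive integer k, the k-th branch of the secant caustic, θ ↦ γ_p(θ) − γ_p(θ + kπ), is again a hedgehog: γ_p(θ) − γ_p(θ + kπ) = γ_q(θ) for all θ, where q(θ) = p(θ) + (−1)^{k+1} p(θ + kπ) is its support function. -/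
open Real

/-- The hedgehog (support-function) parametrization associated with `p`. -/
noncomputable def hedgehog (p : ℝ → ℝ) (θ : ℝ) : ℝ × ℝ :=
  (p θ * Real.cos θ - deriv p θ * Real.sin θ, p θ * Real.sin θ + deriv p θ * Real.cos θ)

/-- Each branch of the secant caustic of a hedgehog is again a hedgehog, with
support function `q(θ) = p(θ) + (−1)^(k+1) p(θ + kπ)`. -/
theorem secant_caustic_branch_is_hedgehog
    (p : ℝ → ℝ) (hp : ContDiff ℝ (⊤ : ℕ∞) p) (k : ℕ) (hk : 0 < k)
    (q : ℝ → ℝ) (hq : ∀ θ, q θ = p θ + (-1 : ℝ) ^ (k + 1) * p (θ + k * π)) :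
    ∀ θ : ℝ, hedgehog p θ - hedgehog p (θ + k * π) = hedgehog q θ := by
  intro θ
  have hdp : Differentiable ℝ p := hp.differentiable (by simp)
  have hq' : q = fun θ => p θ + (-1 : ℝ) ^ (k + 1) * p (θ + k * π) := funext hq
  have hder : HasDerivAt q (deriv p θ + (-1 : ℝ) ^ (k + 1) * deriv p (θ + k * π)) θ := by
    rw [hq']
    have h1 : HasDerivAt (fun θ : ℝ => p (θ + k * π)) (deriv p (θ + k * π)) θ := by
      have := ((hdp (θ + k * π)).hasDerivAt).comp θ ((hasDerivAt_id θ).add_const (k * π))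
      simpa [Function.comp_def] using this
    exact (hdp θ).hasDerivAt.add (h1.const_mul _)
  have hderq : deriv q θ = deriv p θ + (-1 : ℝ) ^ (k + 1) * deriv p (θ + k * π) := hder.deriv
  simp only [hedgehog, Prod.mk_sub_mk, Prod.mk.injEq, hq θ, hderq,
    Real.cos_add_nat_mul_pi, Real.sin_add_nat_mul_pi, pow_succ]
  constructor <;> ring
end

section
/- Let n ≥ 1, let p : ℝ → ℝ be a smooth 2nπ-periodic function, and let k be an even positive integer. Then there exists θ ∈ [0, 2nπ] with ρ_p(θ) = ρ_p(θ + kπ), where ρ_p = p + p''; at such θ the derivative of the branch θ ↦ γ_p(θ) − γ_p(θ + kπ) of the secant caustic vanishes, i.e. this branch of the secant caustic of the rosette is singular. -/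
open Real

lemma periodic_deriv' {f : ℝ → ℝ} (hf : Differentiable ℝ f) {c : ℝ}
    (h : Function.Periodic f c) : Function.Periodic (deriv f) c := by
  intro x
  have h1 : (fun y => f (y + c)) = f := funext h
  have h2 : deriv (fun y => f (y + c)) x = deriv f (x + c) := by
    simpa using ((hf (x + c)).hasDerivAt.comp_add_const x c).deriv
  rw [h1] at h2
  exact h2.symm

lemma hedgehog_hasDerivAt (p : ℝ → ℝ) (hp : ContDiff ℝ (⊤ : ℕ∞) p) (θ : ℝ) :
    HasDerivAt (hedgehog p)
      ((p θ + deriv (deriv p) θ) • (-(Real.sin θ), Real.cos θ)) θ := by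
  have hp' : ContDiff ℝ ((⊤:ℕ∞) : WithTop ℕ∞) p := hp.of_le (by simp)
  have hp1 : Differentiable ℝ p := hp.differentiable (by simp)
  have hp2 : ContDiff ℝ ((⊤:ℕ∞) : WithTop ℕ∞) (deriv p) :=
    (contDiff_infty_iff_deriv.mp hp').2
  have hp2' : Differentiable ℝ (deriv p) := hp2.differentiable (by simp)
  have h1 : HasDerivAt p (deriv p θ) θ := (hp1 θ).hasDerivAt
  have h2 : HasDerivAt (deriv p) (deriv (deriv p) θ) θ := (hp2' θ).hasDerivAt
  have hc : HasDerivAt Real.cos (-(Real.sin θ)) θ := Real.hasDerivAt_cos θ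
  have hs : HasDerivAt Real.sin (Real.cos θ) θ := Real.hasDerivAt_sin θ
  have hA : HasDerivAt (fun θ => p θ * Real.cos θ - deriv p θ * Real.sin θ)
      (-((p θ + deriv (deriv p) θ) * Real.sin θ)) θ := by
    have := ((h1.mul hc).sub (h2.mul hs))
    exact this.congr_deriv (by ring)
  have hB : HasDerivAt (fun θ => p θ * Real.sin θ + deriv p θ * Real.cos θ)
      ((p θ + deriv (deriv p) θ) * Real.cos θ) θ := by
    have := ((h1.mul hs).add (h2.mul hc))
    exact this.congr_deriv (by ring)
  have := hA.prodMk hB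
  refine this.congr_deriv ?_
  simp only [Prod.smul_def, Prod.smul_mk, smul_eq_mul, Prod.mk.injEq]
  exact ⟨by ring, trivial⟩

/-- For `k` even, the `k`-th branch of the secant caustic of an `n`-rosette is
singular somewhere in a period. -/
theorem secant_caustic_branch_even_is_singular
    (n : ℕ) (hn : 1 ≤ n) (p : ℝ → ℝ) (hp : ContDiff ℝ (⊤ : ℕ∞) p)
    (hper : Function.Periodic p (2 * n * π))
    (ρ : ℝ → ℝ) (hρ : ∀ θ, ρ θ = p θ + deriv (deriv p) θ)
    (k : ℕ) (hk : 0 < k) (heven : Even k) :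
    ∃ θ ∈ Set.Icc (0 : ℝ) (2 * n * π), ρ θ = ρ (θ + k * π) ∧
      deriv (fun θ => hedgehog p θ - hedgehog p (θ + k * π)) θ = 0 := by
  obtain ⟨m, hm⟩ := heven
  have hm' : k = 2 * m := by omega
  set T : ℝ := 2 * n * π with hTdef
  have hn' : (0:ℝ) < n := by exact_mod_cast hn
  have hT : 0 < T := by
    have := Real.pi_pos
    positivity
  have hp' : ContDiff ℝ ((⊤:ℕ∞) : WithTop ℕ∞) p := hp.of_le (by simp)
  have hp1 : Differentiable ℝ p := hp.differentiable (by simp)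
  have hp2 : ContDiff ℝ ((⊤:ℕ∞) : WithTop ℕ∞) (deriv p) :=
    (contDiff_infty_iff_deriv.mp hp').2
  have hp2' : Differentiable ℝ (deriv p) := hp2.differentiable (by simp)
  have hp3 : ContDiff ℝ ((⊤:ℕ∞) : WithTop ℕ∞) (deriv (deriv p)) :=
    (contDiff_infty_iff_deriv.mp hp2).2
  have hρeq : ρ = fun θ => p θ + deriv (deriv p) θ := funext hρ
  have hρcont : Continuous ρ := by
    rw [hρeq]; exact hp.continuous.add hp3.continuous
  have hderiv_per : Function.Periodic (deriv p) T := periodic_deriv' hp1 hper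
  have hρper : Function.Periodic ρ T := by
    intro x; rw [hρeq]
    simp only
    rw [hper x, periodic_deriv' hp2' hderiv_per x]
  -- the function whose zero we seek
  set c : ℝ := k * π with hcdef
  set G : ℝ → ℝ := fun θ => ρ θ - ρ (θ + c) with hGdef
  have hGcont : Continuous G := hρcont.sub (hρcont.comp (continuous_id.add continuous_const))
  have hGper : Function.Periodic G T := by
    intro x
    simp only [hGdef]
    rw [hρper x]
    have : x + T + c = x + c + T := by ring
    rw [this, hρper (x + c)]
  -- telescoping sum over n steps is zero
  have hsum : ∑ i ∈ Finset.range n, G (i * c) = 0 := by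
    have h1 : ∀ i : ℕ, G (i * c) = ρ (i * c) - ρ ((i + 1 : ℕ) * c) := by
      intro i
      simp only [hGdef]
      congr 1
      push_cast
      ring
    calc ∑ i ∈ Finset.range n, G (i * c)
        = ∑ i ∈ Finset.range n, (ρ (i * c) - ρ ((i + 1 : ℕ) * c)) := by
          exact Finset.sum_congr rfl fun i _ => h1 i
      _ = ρ ((0:ℕ) * c) - ρ (n * c) := Finset.sum_range_sub' (fun i => ρ (i * c)) n
      _ = 0 := by
          have hnc : (n : ℝ) * c = (0:ℝ) + (m : ℝ) * T := by
            simp only [hcdef, hTdef, hm']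
            push_cast
            ring
          rw [hnc, (hρper.nat_mul m) 0]
          norm_num
  -- find points where G has opposite signs
  have hne : (Finset.range n).Nonempty := ⟨0, Finset.mem_range.mpr hn⟩
  have hex_le : ∃ i ∈ Finset.range n, G (↑i * c) ≤ 0 := by
    by_contra h
    push_neg at h
    have : 0 < ∑ i ∈ Finset.range n, G (↑i * c) := Finset.sum_pos h hne
    linarith
  have hex_ge : ∃ i ∈ Finset.range n, 0 ≤ G (↑i * c) := by
    by_contra h
    push_neg at h
    have h2 : 0 < ∑ i ∈ Finset.range n, (-(G (↑i * c))) :=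
      Finset.sum_pos (fun i hi => neg_pos.mpr (h i hi)) hne
    rw [Finset.sum_neg_distrib] at h2
    linarith
  obtain ⟨a, -, ha⟩ := hex_le
  obtain ⟨b, -, hb⟩ := hex_ge
  -- intermediate value theorem
  have hmem : (0:ℝ) ∈ Set.uIcc (G (↑a * c)) (G (↑b * c)) :=
    Set.mem_uIcc.mpr (Or.inl ⟨ha, hb⟩)
  obtain ⟨θ₀, -, hθ₀⟩ := intermediate_value_uIcc (hGcont.continuousOn) hmem
  -- move the zero into [0, T)
  obtain ⟨θ, hθI, hGθ⟩ := hGper.exists_mem_Ico₀ hT θ₀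
  have hGzero : G θ = 0 := by rw [← hGθ, hθ₀]
  have hρθ : ρ θ = ρ (θ + c) := by
    have := sub_eq_zero.mp hGzero
    exact this
  refine ⟨θ, Set.Ico_subset_Icc_self hθI, hρθ, ?_⟩
  -- compute the derivative
  have hcm : c = (m : ℝ) * (2 * π) := by
    simp only [hcdef, hm']
    push_cast
    ring
  have hsin : Real.sin (θ + c) = Real.sin θ := by
    rw [hcm]; exact Real.sin_add_nat_mul_two_pi θ m
  have hcos : Real.cos (θ + c) = Real.cos θ := by
    rw [hcm]; exact Real.cos_add_nat_mul_two_pi θ m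
  have h1 : HasDerivAt (hedgehog p) (ρ θ • (-(Real.sin θ), Real.cos θ)) θ := by
    rw [hρ θ]; exact hedgehog_hasDerivAt p hp θ
  have hshift : HasDerivAt (fun x : ℝ => x + c) 1 θ := (hasDerivAt_id θ).add_const c
  have h2 : HasDerivAt (fun x => hedgehog p (x + c))
      (ρ (θ + c) • (-(Real.sin (θ + c)), Real.cos (θ + c))) θ := by
    have := HasDerivAt.scomp θ (hedgehog_hasDerivAt p hp (θ + c)) hshift
    rw [hρ (θ + c)]
    simp at this ⊢
    exact this
  have hD := h1.sub h2
  have hval : ρ θ • (-(Real.sin θ), Real.cos θ)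
      - ρ (θ + c) • (-(Real.sin (θ + c)), Real.cos (θ + c)) = 0 := by
    rw [hsin, hcos, ← hρθ, sub_self]
  rw [hval] at hD
  exact hD.deriv
end

section
/- Let n ≥ 2, let p : ℝ → ℝ be a smooth 2nπ-periodic function, and let k be an integer with 1 ≤ k ≤ n − 1. Define the Blaschke area functional B(q) = ½∫₀^{2nπ} (q(θ)² − q'(θ)²) dθ. Let u(θ) = p(θ) and v(θ) = (−1)^k p(θ + kπ). Then B(u − v) + 4·B((u + v)/2) = 4·B(p). (In terms of oriented areas: Ã_{SC_k(R_n)} + 4·Ã_{E_{0.5,k}(R_n)} = 4·Ã_{R_n}, where SC_k(R_n) is the k-th branch of the secant caustic of the n-rosette R_n, with support function p(θ) − (−1)^k p(θ + kπ), and E_{0.5,k}(R_n) is the k-th branch of its Wigner caustic, with support function ½(p(θ) + (−1)^k p(θ + kπ)).) -/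
open Real

/-- Blaschke's oriented-area functional of a support function `q` over `[0, T]`. -/
noncomputable def blaschke (T : ℝ) (q : ℝ → ℝ) : ℝ :=
  (1 / 2) * ∫ θ in (0 : ℝ)..T, (q θ ^ 2 - deriv q θ ^ 2)

/-- Oriented-area relation between a branch of the secant caustic, the corresponding
branch of the Wigner caustic and the rosette itself (case `k < n`). -/
theorem secant_caustic_area_relation
    (n : ℕ) (hn : 2 ≤ n) (p : ℝ → ℝ) (hp : ContDiff ℝ (⊤ : ℕ∞) p)
    (hper : Function.Periodic p (2 * n * π))
    (k : ℕ) (hk1 : 1 ≤ k) (hk2 : k ≤ n - 1)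
    (u v : ℝ → ℝ) (hu : ∀ θ, u θ = p θ)
    (hv : ∀ θ, v θ = (-1 : ℝ) ^ k * p (θ + k * π)) :
    blaschke (2 * n * π) (fun θ => u θ - v θ) +
      4 * blaschke (2 * n * π) (fun θ => (u θ + v θ) / 2) =
      4 * blaschke (2 * n * π) p := by
  simp only [hu, hv]
  have hdp : Differentiable ℝ p := hp.differentiable (by simp)
  have hcp : Continuous p := hp.continuous
  have hcp' : Continuous (deriv p) := hp.continuous_deriv (by simp)
  set T : ℝ := 2 * n * π with hT
  set a : ℝ := (k : ℝ) * π with ha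
  set c : ℝ := (-1 : ℝ) ^ k with hc
  have hc2 : c ^ 2 = 1 := by rw [hc, ← pow_mul, mul_comm, pow_mul]; norm_num
  -- derivative computations
  have hdv : ∀ θ : ℝ, HasDerivAt (fun θ => c * p (θ + a)) (c * deriv p (θ + a)) θ := by
    intro θ
    exact ((hdp (θ + a)).hasDerivAt.comp_add_const θ a).const_mul c
  have hd1 : ∀ θ, deriv (fun θ => p θ - c * p (θ + a)) θ
      = deriv p θ - c * deriv p (θ + a) := fun θ =>
    ((hdp θ).hasDerivAt.sub (hdv θ)).deriv
  have hd2 : ∀ θ, deriv (fun θ => (p θ + c * p (θ + a)) / 2) θ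
      = (deriv p θ + c * deriv p (θ + a)) / 2 := fun θ =>
    (((hdp θ).hasDerivAt.add (hdv θ)).div_const 2).deriv
  -- the periodic integrand `g`
  set g : ℝ → ℝ := fun θ => p θ ^ 2 - deriv p θ ^ 2 with hg
  have hperd : Function.Periodic (deriv p) T := by
    intro x
    have h1 : (fun θ => p (θ + T)) = p := funext fun θ => hper θ
    calc deriv p (x + T) = deriv (fun θ => p (θ + T)) x :=
          (deriv_comp_add_const p T x).symm
      _ = deriv p x := by rw [h1]
  have hgper : Function.Periodic g T := fun x => by
    simp only [hg, hper x, hperd x]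
  -- continuity / integrability
  have hcsh : Continuous fun θ => p (θ + a) :=
    hcp.comp (continuous_id.add continuous_const)
  have hcsh' : Continuous fun θ => deriv p (θ + a) :=
    hcp'.comp (continuous_id.add continuous_const)
  have hint1 : IntervalIntegrable
      (fun θ => (p θ - c * p (θ + a)) ^ 2 - (deriv p θ - c * deriv p (θ + a)) ^ 2)
      MeasureTheory.volume 0 T :=
    (((hcp.sub (continuous_const.mul hcsh)).pow 2).sub
      ((hcp'.sub (continuous_const.mul hcsh')).pow 2)).intervalIntegrable 0 T
  have hint2 : IntervalIntegrable
      (fun θ => 4 * (((p θ + c * p (θ + a)) / 2) ^ 2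
        - ((deriv p θ + c * deriv p (θ + a)) / 2) ^ 2))
      MeasureTheory.volume 0 T :=
    (continuous_const.mul ((((hcp.add (continuous_const.mul hcsh)).div_const 2).pow 2).sub
      (((hcp'.add (continuous_const.mul hcsh')).div_const 2).pow 2))).intervalIntegrable 0 T
  have hcg : Continuous g := (hcp.pow 2).sub (hcp'.pow 2)
  have hintg : IntervalIntegrable (fun θ => 2 * g θ) MeasureTheory.volume 0 T :=
    (continuous_const.mul hcg).intervalIntegrable 0 T
  have hintgs : IntervalIntegrable (fun θ => 2 * g (θ + a)) MeasureTheory.volume 0 T :=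
    (continuous_const.mul (hcg.comp (continuous_id.add continuous_const))).intervalIntegrable 0 T
  -- main computation on integrals
  have key : ∀ θ : ℝ,
      ((p θ - c * p (θ + a)) ^ 2 - (deriv p θ - c * deriv p (θ + a)) ^ 2)
        + 4 * (((p θ + c * p (θ + a)) / 2) ^ 2
          - ((deriv p θ + c * deriv p (θ + a)) / 2) ^ 2)
      = 2 * g θ + 2 * g (θ + a) := by
    intro θ
    simp only [hg]
    linear_combination (2 * p (θ + a) ^ 2 - 2 * deriv p (θ + a) ^ 2) * hc2
  have hshift : (∫ θ in (0:ℝ)..T, g (θ + a)) = ∫ θ in (0:ℝ)..T, g θ := by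
    rw [intervalIntegral.integral_comp_add_right g a, zero_add, add_comm T a]
    simpa using hgper.intervalIntegral_add_eq a 0
  have hmain :
      (∫ θ in (0:ℝ)..T,
        ((p θ - c * p (θ + a)) ^ 2 - (deriv p θ - c * deriv p (θ + a)) ^ 2))
      + 4 * (∫ θ in (0:ℝ)..T,
        (((p θ + c * p (θ + a)) / 2) ^ 2 - ((deriv p θ + c * deriv p (θ + a)) / 2) ^ 2))
      = 4 * ∫ θ in (0:ℝ)..T, g θ := by
    rw [← intervalIntegral.integral_const_mul, ← intervalIntegral.integral_add hint1 hint2]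
    have hcongr :
        (∫ θ in (0:ℝ)..T,
          (((p θ - c * p (θ + a)) ^ 2 - (deriv p θ - c * deriv p (θ + a)) ^ 2)
            + 4 * (((p θ + c * p (θ + a)) / 2) ^ 2
              - ((deriv p θ + c * deriv p (θ + a)) / 2) ^ 2)))
        = ∫ θ in (0:ℝ)..T, (2 * g θ + 2 * g (θ + a)) := by
      apply intervalIntegral.integral_congr
      intro θ _
      exact key θ
    rw [hcongr, intervalIntegral.integral_add hintg hintgs,
      intervalIntegral.integral_const_mul, intervalIntegral.integral_const_mul, hshift]
    ring
  -- conclude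
  simp only [blaschke, hd1, hd2]
  simp only [hg] at hmain
  linarith [hmain]
end

section
/- Let n ≥ 1 and let p : ℝ → ℝ be a smooth 2nπ-periodic function. Let u(θ) = p(θ) and v(θ) = (−1)^n p(θ + nπ), and set w = (u + v)/2. Then ½∫₀^{2nπ} ((u − v)(θ)² − (u − v)'(θ)²) dθ + 8·(½∫₀^{nπ} (w(θ)² − w'(θ)²) dθ) = 4·(½∫₀^{2nπ} (p(θ)² − p'(θ)²) dθ). (In terms of oriented areas: Ã_{SC_n(R_n)} + 8·Ã_{E_{0.5,n}(R_n)} = 4·Ã_{R_n}, where SC_n(R_n) is the n-th branch of the secant caustic of the n-rosette R_n, parametrized over [0, 2nπ], and E_{0.5,n}(R_n) is the central branch of its Wigner caustic, parametrized over [0, nπ].) -/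
open Real

/-- Oriented-area relation between the central branch of the secant caustic, the
central branch of the Wigner caustic and the rosette itself (case `k = n`). -/
theorem secant_caustic_area_relation_central
    (n : ℕ) (hn : 1 ≤ n) (p : ℝ → ℝ) (hp : ContDiff ℝ (⊤ : ℕ∞) p)
    (hper : Function.Periodic p (2 * n * π))
    (u v w : ℝ → ℝ) (hu : ∀ θ, u θ = p θ)
    (hv : ∀ θ, v θ = (-1 : ℝ) ^ n * p (θ + n * π))
    (hw : ∀ θ, w θ = (u θ + v θ) / 2) :
    (1 / 2) * (∫ θ in (0 : ℝ)..(2 * n * π),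
        ((u θ - v θ) ^ 2 - deriv (fun θ => u θ - v θ) θ ^ 2)) +
      8 * ((1 / 2) * ∫ θ in (0 : ℝ)..(n * π), (w θ ^ 2 - deriv w θ ^ 2)) =
      4 * ((1 / 2) * ∫ θ in (0 : ℝ)..(2 * n * π), (p θ ^ 2 - deriv p θ ^ 2)) := by
  have hU : u = p := funext hu
  set c : ℝ := (-1 : ℝ) ^ n with hc
  set a : ℝ := (n : ℝ) * π with ha
  have hc2 : c ^ 2 = 1 := by
    rw [hc, ← pow_mul, mul_comm, pow_mul, neg_one_sq, one_pow]
  set q : ℝ → ℝ := fun θ => c * p (θ + a) with hq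
  have hV : v = q := funext hv
  have hW : w = fun θ => (p θ + q θ) / 2 := by
    funext θ; rw [hw θ, hU, hV]
  rw [hU, hV, hW]
  have hpd : Differentiable ℝ p := hp.differentiable (by simp)
  have hpshift : Differentiable ℝ (fun θ : ℝ => p (θ + a)) :=
    hpd.comp (differentiable_id.add_const a)
  have hqd : Differentiable ℝ q := hpshift.const_mul c
  have hq' : ∀ θ, deriv q θ = c * deriv p (θ + a) := by
    intro θ
    rw [hq]
    rw [deriv_const_mul _ (hpshift θ), deriv_comp_add_const]
  have hpc : Continuous p := hp.continuous
  have hp'c : Continuous (deriv p) := hp.continuous_deriv (by simp)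
  have hq'c : Continuous (deriv q) := by
    have : (deriv q) = fun θ => c * deriv p (θ + a) := funext hq'
    rw [this]
    exact continuous_const.mul (hp'c.comp (by continuity))
  have hqc : Continuous q := continuous_const.mul (hpc.comp (by continuity : Continuous fun θ : ℝ => θ + a))
  -- periodicity of p with period 2a
  have hper' : ∀ θ, p (θ + 2 * a) = p θ := by
    intro θ
    have := hper θ
    rw [ha]
    convert this using 2
    ring
  have hp'per : ∀ θ, deriv p (θ + 2 * a) = deriv p θ := by
    intro θ
    have h1 : (fun x : ℝ => p (x + 2 * a)) = p := funext hper'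
    have := deriv_comp_add_const p (2 * a) θ
    rw [h1] at this
    exact this.symm
  -- the key integrands
  set F : ℝ → ℝ := fun θ => p θ ^ 2 - deriv p θ ^ 2 with hF
  set G : ℝ → ℝ := fun θ => q θ ^ 2 - deriv q θ ^ 2 with hG
  set A : ℝ → ℝ := fun θ => (p θ - q θ) ^ 2 - deriv (fun θ => p θ - q θ) θ ^ 2 with hA
  set B : ℝ → ℝ := fun θ => ((p θ + q θ) / 2) ^ 2 -
      deriv (fun θ => (p θ + q θ) / 2) θ ^ 2 with hB
  have hA' : ∀ θ, A θ = (p θ - q θ) ^ 2 - (deriv p θ - deriv q θ) ^ 2 := by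
    intro θ
    rw [hA]
    simp only []
    rw [deriv_fun_sub (hpd θ) (hqd θ)]
  have hB' : ∀ θ, B θ = ((p θ + q θ) / 2) ^ 2 - ((deriv p θ + deriv q θ) / 2) ^ 2 := by
    intro θ
    rw [hB]
    simp only []
    rw [deriv_div_const, deriv_fun_add (hpd θ) (hqd θ)]
  have hBc : Continuous B := by
    have : B = fun θ => ((p θ + q θ) / 2) ^ 2 - ((deriv p θ + deriv q θ) / 2) ^ 2 :=
      funext hB'
    rw [this]
    fun_prop
  have hAc : Continuous A := by
    have : A = fun θ => (p θ - q θ) ^ 2 - (deriv p θ - deriv q θ) ^ 2 := funext hA'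
    rw [this]
    fun_prop
  have hFc : Continuous F := by rw [hF]; fun_prop
  have hGc : Continuous G := by rw [hG]; fun_prop
  -- G is F shifted by a
  have hGF : ∀ θ, G θ = F (θ + a) := by
    intro θ
    rw [hG, hF]
    simp only []
    rw [hq' θ, hq]
    simp only []
    rw [mul_pow, mul_pow, hc2, one_mul, one_mul]
  -- B is a-periodic
  have hBper : ∀ θ, B (θ + a) = B θ := by
    intro θ
    rw [hB' (θ + a), hB' θ]
    have h1 : q (θ + a) = c * p (θ + 2 * a) := by rw [hq]; ring_nf
    have h2 : p (θ + a) = c * q θ := by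
      rw [hq]
      simp only []
      rw [← mul_assoc, ← pow_two, hc2, one_mul]
    have h3 : deriv q (θ + a) = c * deriv p (θ + 2 * a) := by
      rw [hq' (θ + a)]; ring_nf
    have h4 : deriv p (θ + a) = c * deriv q θ := by
      rw [hq' θ, ← mul_assoc, ← pow_two, hc2, one_mul]
    rw [h1, h2, h3, h4, hper' θ, hp'per θ]
    have : ∀ x y : ℝ, ((c * y + c * x) / 2) ^ 2 = ((x + y) / 2) ^ 2 := by
      intro x y
      have : ((c * y + c * x) / 2) ^ 2 = c ^ 2 * ((x + y) / 2) ^ 2 := by ring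
      rw [this, hc2, one_mul]
    rw [this (p θ) (q θ), this (deriv p θ) (deriv q θ)]
  -- split the B integral
  have hsplit : (∫ θ in (0 : ℝ)..(2 * a), B θ) = 2 * ∫ θ in (0 : ℝ)..a, B θ := by
    have h1 : (∫ θ in (0 : ℝ)..(2 * a), B θ) =
        (∫ θ in (0 : ℝ)..a, B θ) + ∫ θ in a..(2 * a), B θ := by
      rw [intervalIntegral.integral_add_adjacent_intervals
        (hBc.intervalIntegrable _ _) (hBc.intervalIntegrable _ _)]
    have h2 : (∫ θ in a..(2 * a), B θ) = ∫ θ in (0 : ℝ)..a, B θ := by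
      have h := intervalIntegral.integral_comp_add_right (a := (0:ℝ)) (b := a) B a
      rw [zero_add, show a + a = 2 * a by ring] at h
      rw [← h]
      exact intervalIntegral.integral_congr fun x _ => hBper x
    rw [h1, h2]; ring
  -- G integral equals F integral
  have hGint : (∫ θ in (0 : ℝ)..(2 * a), G θ) = ∫ θ in (0 : ℝ)..(2 * a), F θ := by
    have h1 : (∫ θ in (0 : ℝ)..(2 * a), G θ) = ∫ θ in a..(2 * a + a), F θ := by
      rw [intervalIntegral.integral_congr (g := fun θ => F (θ + a)) (fun x _ => hGF x)]
      have := intervalIntegral.integral_comp_add_right (a := (0:ℝ)) (b := 2 * a) F a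
      rw [zero_add] at this
      exact this
    have hFper : Function.Periodic F (2 * a) := fun x => by
      rw [hF]; simp only []; rw [hper' x, hp'per x]
    have h2 := hFper.intervalIntegral_add_eq a 0
    rw [zero_add, add_comm a (2 * a)] at h2
    rw [h1, h2]
  -- pointwise combination
  have hkey : ∀ θ, (1 / 2 : ℝ) * A θ + 2 * B θ = F θ + G θ := by
    intro θ
    rw [hA' θ, hB' θ, hF, hG]
    simp only []
    ring
  have hT : (2 : ℝ) * n * π = 2 * a := by rw [ha]; ring
  rw [hT]
  have hcomb : (1 / 2 : ℝ) * (∫ θ in (0 : ℝ)..(2 * a), A θ) +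
      2 * (∫ θ in (0 : ℝ)..(2 * a), B θ) =
      (∫ θ in (0 : ℝ)..(2 * a), F θ) + ∫ θ in (0 : ℝ)..(2 * a), G θ := by
    rw [← intervalIntegral.integral_const_mul, ← intervalIntegral.integral_const_mul,
      ← intervalIntegral.integral_add
        ((hAc.intervalIntegrable _ _).const_mul _) ((hBc.intervalIntegrable _ _).const_mul _),
      ← intervalIntegral.integral_add
        (hFc.intervalIntegrable _ _) (hGc.intervalIntegrable _ _)]
    exact intervalIntegral.integral_congr fun x _ => hkey x
  calc (1 / 2 : ℝ) * (∫ θ in (0 : ℝ)..(2 * a), A θ) +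
        8 * ((1 / 2) * ∫ θ in (0 : ℝ)..a, B θ)
      = (1 / 2 : ℝ) * (∫ θ in (0 : ℝ)..(2 * a), A θ) +
        2 * (∫ θ in (0 : ℝ)..(2 * a), B θ) := by rw [hsplit]; ring
    _ = (∫ θ in (0 : ℝ)..(2 * a), F θ) + ∫ θ in (0 : ℝ)..(2 * a), G θ := hcomb
    _ = 4 * ((1 / 2) * ∫ θ in (0 : ℝ)..(2 * a), F θ) := by rw [hGint]; ring
end
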